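/- arXiv:2504.16699 — 3 statements merged into one kernel-verified Lean document; each statement's English description precedes it below -/
import Mathlib

section
/- Let ℛ be a noetherian Banach K-algebra with triangular decomposition and let Ô be the category of finitely generated ℛ-modules that are finite over 𝒜 and admit a weight space decomposition for ∂. Then Ô is closed under quotients by arbitrary ℛ-submodules: if M ∈ Ô and N ⊂ M is an ℛ-submodule, then M/N ∈ Ô. -/
/-- The `K`-linear endomorphism of a module given by the action of a fixed
element `∂` of the acting ring. -/
def smulEnd (K : Type) {R M : Type} [CommRing K] [Ring R] [Algebra K R]
    [AddCommGroup M] [Module K M] [Module R M] [SMulCommClass K R M]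
    (del : R) : Module.End K M where
  toFun m := del • m
  map_add' x y := smul_add del x y
  map_smul' k x := (smul_comm k del x).symm

/-- Let `ℛ` be a noetherian Banach `K`-algebra with triangular
decomposition, and `Ô` the category of finitely generated `ℛ`-modules that are
finite over `𝒜` and admit a weight space decomposition for `∂`.  Then `Ô` is
closed under quotients: if `M ∈ Ô` and `N ⊆ M` is an `ℛ`-submodule, then
`M/N ∈ Ô`. -/
theorem category_O_closed_under_quotients
    (K 𝓡 M : Type) [NontriviallyNormedField K] [CompleteSpace K] [IsUltrametricDist K]
    [NormedRing 𝓡] [NormedAlgebra K 𝓡] [CompleteSpace 𝓡] [IsNoetherianRing 𝓡]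
    (𝓐 : Subalgebra K 𝓡)
    [NormedAddCommGroup M] [Module K M] [NormedSpace K M] [CompleteSpace M]
    [Module 𝓡 M] [IsScalarTower K 𝓡 M] [SMulCommClass K 𝓡 M]
    (del : 𝓡)  -- the grading element `∂ ∈ R ⊆ ℛ`
    -- `M` is an object of `Ô` :
    [Module.Finite 𝓡 M] [Module.Finite 𝓐 M]
    (hdecM : ∀ m : M, ∃ c : K → M,
      (∀ lam : K, c lam ∈ (smulEnd K del : Module.End K M).maxGenEigenspace lam) ∧
      HasSum c m)
    (N : Submodule 𝓡 M) [SMulCommClass K 𝓡 (M ⧸ N)] :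
    Module.Finite 𝓡 (M ⧸ N) ∧ Module.Finite 𝓐 (M ⧸ N) ∧
      ∀ y : M ⧸ N, ∃ c : K → M ⧸ N,
        (∀ lam : K,
          c lam ∈ (smulEnd K del : Module.End K (M ⧸ N)).maxGenEigenspace lam) ∧
        HasSum c y := by
  refine ⟨Module.Finite.of_surjective N.mkQ (Submodule.mkQ_surjective N),
    Module.Finite.of_surjective ((N.mkQ).restrictScalars 𝓐)
      (Submodule.mkQ_surjective N), ?_⟩
  intro y
  obtain ⟨m, rfl⟩ := Submodule.mkQ_surjective N y
  obtain ⟨c, hc, hsum⟩ := hdecM m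
  have hcomm : ∀ (lam : K) (k : ℕ) (x : M),
      (((smulEnd K del - lam • 1) ^ k : Module.End K (M ⧸ N))) (N.mkQ x)
        = N.mkQ ((((smulEnd K del - lam • 1) ^ k : Module.End K M)) x) := by
    intro lam k
    induction k with
    | zero => intro x; simp
    | succ k ih =>
      intro x
      rw [pow_succ, pow_succ, Module.End.mul_apply, Module.End.mul_apply]
      have h1 : ((smulEnd K del - lam • 1 : Module.End K (M ⧸ N)) (N.mkQ x))
          = N.mkQ ((smulEnd K del - lam • 1 : Module.End K M) x) := by
        show del • N.mkQ x - lam • N.mkQ x = N.mkQ (del • x - lam • x)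
        simp only [map_sub, Submodule.mkQ_apply, Submodule.Quotient.mk_smul]
      rw [h1, ih]
  refine ⟨fun lam => N.mkQ (c lam), fun lam => ?_, ?_⟩
  · rw [Module.End.mem_maxGenEigenspace]
    obtain ⟨k, hk⟩ := (Module.End.mem_maxGenEigenspace _ _ _).mp (hc lam)
    exact ⟨k, by rw [hcomm, hk, map_zero]⟩
  · exact hsum.map (N.mkQ.toAddMonoidHom) continuous_quot_mk
end

section
/- Let X = lim→ X_n be a rigid analytic Stein space over K with an action of a finite group G. Then the subsets X̃_n = ∩_{g∈G} g(X_n) form (after discarding empty terms) a Stein covering of X by G-invariant affinoid subdomains; consequently X admits an admissible cover by G-stable affinoid subdomains (property (G-Aff)) and the quotient X/G exists and is again a Stein space. -/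
open scoped Pointwise


lemma pair_iInter_aux {X G : Type} [Fintype G] [Nonempty G]
    (Q : Set X → Set X → Prop)
    (h2 : ∀ s t s' t' : Set X, Q s t → Q s' t' → Q (s ∩ s') (t ∩ t'))
    (f f' : G → Set X) (h : ∀ g, Q (f g) (f' g)) :
    Q (⋂ g, f g) (⋂ g, f' g) := by
  have key : ∀ s : Finset G, s.Nonempty → Q (⋂ g ∈ s, f g) (⋂ g ∈ s, f' g) := by
    intro s hs
    induction hs using Finset.Nonempty.cons_induction with
    | singleton a => simpa using h a
    | cons a s ha hs ih =>
        simpa [Finset.set_biInter_insert] using h2 _ _ _ _ (h a) ih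
  have := key Finset.univ Finset.univ_nonempty
  simpa using this


/-- Let `X = lim→ X_n` be a rigid analytic Stein space over `K` with
an action of a finite group `G`.  Then the subsets `X̃_n = ∩_{g∈G} g(X_n)` form a
Stein covering of `X` by `G`-invariant affinoid subdomains; consequently `X`
admits an admissible cover by `G`-stable affinoid subdomains (property (G-Aff)),
so by Hansen's theorem the quotient `X/G` exists (and is again Stein).

Since rigid analytic geometry is not available in Mathlib, we formalize the
set-theoretic/combinatorial core: `X` is a `G`-set exhausted by a monotone family
`X_n` of subsets each having the property `P` ("affinoid subdomain of the Stein
covering"), with `P` stable under translation by `G` and binary intersection, and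
with a relation `Rc` ("relatively compact Weierstrass subdomain") holding between
consecutive terms and stable under translation and intersections (Bosch, Lemma
6.3.7).  Then the `X̃_n = ∩_{g∈G} g(X_n)` are `G`-invariant, have property `P`,
are monotone, exhaust `X`, and satisfy `X̃_n Rc X̃_{n+1}`: a `G`-invariant Stein
covering, giving (G-Aff). -/
theorem stein_space_G_invariant_stein_covering
    (X G : Type) [Group G] [Fintype G] [MulAction G X]
    (Xn : ℕ → Set X) (hmono : Monotone Xn) (hcover : (⋃ n, Xn n) = Set.univ)
    (P : Set X → Prop) (hP : ∀ n, P (Xn n))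
    (hPg : ∀ (g : G) (s : Set X), P s → P (g • s))
    (hPinter : ∀ s t : Set X, P s → P t → P (s ∩ t))
    (Rc : Set X → Set X → Prop) (hRc : ∀ n, Rc (Xn n) (Xn (n + 1)))
    (hRcg : ∀ (g : G) (s t : Set X), Rc s t → Rc (g • s) (g • t))
    (hRcinter : ∀ s t s' t' : Set X, Rc s t → Rc s' t' → Rc (s ∩ s') (t ∩ t')) :
    let T : ℕ → Set X := fun n => ⋂ g : G, g • Xn n
    (∀ (n : ℕ) (g : G), g • T n = T n) ∧
    (∀ n, P (T n)) ∧
    Monotone T ∧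
    (⋃ n, T n) = Set.univ ∧
    (∀ n, Rc (T n) (T (n + 1))) := by
  intro T
  refine ⟨?_, ?_, ?_, ?_, ?_⟩
  · intro n g
    show g • ⋂ h : G, h • Xn n = ⋂ h : G, h • Xn n
    rw [Set.smul_set_iInter]
    have : ∀ h : G, g • h • Xn n = (g * h) • Xn n := fun h => (smul_smul g h _)
    simp_rw [this]
    exact (Equiv.mulLeft g).surjective.iInter_comp (fun k => k • Xn n)
  · intro n
    exact pair_iInter_aux (fun s t => P s)
      (fun s t s' t' hs hs' => hPinter s s' hs hs') _ (fun g => g • Xn n)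
      (fun g => hPg g _ (hP n))
  · intro m n hmn
    exact Set.iInter_mono fun g => Set.smul_set_mono (hmono hmn)
  · apply Set.eq_univ_of_forall
    intro x
    have hx : ∀ g : G, ∃ n, g⁻¹ • x ∈ Xn n := by
      intro g
      have : g⁻¹ • x ∈ ⋃ n, Xn n := hcover ▸ Set.mem_univ _
      simpa using this
    choose n hn using hx
    refine Set.mem_iUnion.2 ⟨Finset.univ.sup n, Set.mem_iInter.2 fun g => ?_⟩
    rw [Set.mem_smul_set_iff_inv_smul_mem]
    exact hmono (Finset.le_sup (Finset.mem_univ g)) (hn g)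
  · intro m
    exact pair_iInter_aux Rc hRcinter _ _ (fun g => hRcg g _ _ (hRc m))
end

section
/- Let f : V₁ → V₂ and g : W₁ → W₂ be strictly completely continuous (scc) bounded K-linear maps of K-Banach spaces, i.e., each is a limit in operator norm of bounded maps with finite-rank image. Then the completed tensor product map f ⊗̂ g : V₁ ⊗̂_K W₁ → V₂ ⊗̂_K W₂ is also strictly completely continuous. -/
/-- A bounded map of Banach spaces is strictly completely continuous (scc) if it
is a limit in operator norm of bounded maps with finite-dimensional image. -/
def IsSCC {K E F : Type} [NontriviallyNormedField K]
    [NormedAddCommGroup E] [NormedSpace K E]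
    [NormedAddCommGroup F] [NormedSpace K F] (h : E →L[K] F) : Prop :=
  ∀ ε : ℝ, 0 < ε → ∃ h' : E →L[K] F,
    FiniteDimensional K (LinearMap.range (h' : E →ₗ[K] F)) ∧ ‖h - h'‖ ≤ ε

/-!
The norm bound makes `(a, b) ↦ a ⊗̂ b` jointly continuous, so `f ⊗̂ g` lies in the closure of
the maps `f' ⊗̂ g'` with `f'`, `g'` of finite rank, and these have finite rank: they send the dense
span of pure tensors into the finite-dimensional span `S` of `bil₂ (im f') (im g')`, hence the
whole space into the closure of `S`.

As `K` need not be complete, finite-dimensional `K`-subspaces need not be closed. But a Banach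
`K`-space is a vector space over the completion `K̂`, and a nonzero finite-rank `f'` between
Banach spaces makes `K̂` finite-dimensional over `K` (`c ↦ c • f' v` embeds it into `im f'`), so
the closure of `S` lies in its `K̂`-span, which is finite-dimensional over `K̂`, hence closed.
-/

open UniformSpace

section CompletionAction

variable (K M : Type*) [NontriviallyNormedField K]
  [NormedAddCommGroup M] [NormedSpace K M] [CompleteSpace M]

noncomputable def completionEndHom : Completion K →+* (M →L[K] M) :=
  Completion.extensionHom (algebraMap K (M →L[K] M)) (continuous_algebraMap K _)

variable {K M}

theorem completionEndHom_coe (k : K) :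
    completionEndHom K M k = algebraMap K (M →L[K] M) k :=
  Completion.extensionHom_coe _ _ k

@[fun_prop]
theorem continuous_completionEndHom : Continuous (completionEndHom K M) :=
  Completion.continuous_extension

theorem norm_completionEndHom_le (c : Completion K) : ‖completionEndHom K M c‖ ≤ ‖c‖ := by
  induction c using Completion.induction_on with
  | hp => exact isClosed_le continuous_completionEndHom.norm continuous_norm
  | ih k =>
    rw [completionEndHom_coe, Completion.norm_coe, norm_algebraMap]
    exact mul_le_of_le_one_right (norm_nonneg k) ContinuousLinearMap.norm_id_le

theorem ContinuousLinearMap.map_completionEndHom_apply {N : Type*} [NormedAddCommGroup N]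
    [NormedSpace K N] [CompleteSpace N] (f : M →L[K] N) (c : Completion K) (m : M) :
    f (completionEndHom K M c m) = completionEndHom K N c (f m) := by
  induction c using Completion.induction_on with
  | hp => exact isClosed_eq (by fun_prop) (by fun_prop)
  | ih k => simp [completionEndHom_coe]

end CompletionAction

section CompletionModule

variable (K : Type*) [NontriviallyNormedField K]

noncomputable abbrev UniformSpace.Completion.nontriviallyNormedField :
    NontriviallyNormedField (Completion K) where
  non_trivial := by
    obtain ⟨k, hk⟩ := NormedField.exists_one_lt_norm K
    exact ⟨k, by rwa [Completion.norm_coe]⟩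

attribute [local instance] UniformSpace.Completion.nontriviallyNormedField

variable (M : Type*) [NormedAddCommGroup M] [NormedSpace K M] [CompleteSpace M]

noncomputable abbrev completionModule : Module (Completion K) M :=
  Module.compHom M (completionEndHom K M)

noncomputable abbrev completionNormedSpace :
    let := completionModule K M; NormedSpace (Completion K) M :=
  let := completionModule K M
  { norm_smul_le c m := (completionEndHom K M c).le_opNorm m |>.trans <|
      mul_le_mul_of_nonneg_right (norm_completionEndHom_le c) (norm_nonneg m) }

theorem completion_isScalarTower :
    let := completionModule K M; IsScalarTower K (Completion K) M :=
  let := completionModule K M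
  { smul_assoc k c m := by
      change completionEndHom K M (k • c) m = k • completionEndHom K M c m
      rw [Algebra.smul_def, map_mul, Completion.algebraMap_def, completionEndHom_coe]
      rfl }

variable {K M}

theorem finiteDimensional_completion_of_finiteDimensional_range {V W : Type*}
    [NormedAddCommGroup V] [NormedSpace K V] [CompleteSpace V]
    [NormedAddCommGroup W] [NormedSpace K W] [CompleteSpace W]
    {f : V →L[K] W} (hf : FiniteDimensional K (LinearMap.range (f : V →ₗ[K] W))) (hf0 : f ≠ 0) :
    FiniteDimensional K (Completion K) := by
  let := completionModule K V
  let := completionModule K W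
  have := completion_isScalarTower K W
  obtain ⟨v, hv⟩ : ∃ v, f v ≠ 0 := by
    by_contra! h
    exact hf0 (ContinuousLinearMap.ext h)
  let e : Completion K →ₗ[K] LinearMap.range (f : V →ₗ[K] W) :=
    LinearMap.codRestrict _ ((LinearMap.toSpanSingleton (Completion K) W (f v)).restrictScalars K)
      fun c => ⟨c • v, f.map_completionEndHom_apply c v⟩
  exact FiniteDimensional.of_injective e fun c d h =>
    smul_left_injective (Completion K) hv (congrArg Subtype.val h)

theorem Submodule.finiteDimensional_topologicalClosure [FiniteDimensional K (Completion K)]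
    (S : Submodule K M) [FiniteDimensional K S] : FiniteDimensional K S.topologicalClosure := by
  let := completionModule K M
  let := completionNormedSpace K M
  have := completion_isScalarTower K M
  obtain ⟨s, hs⟩ := Submodule.fg_iff_finiteDimensional S |>.mpr inferInstance
  let S' := Submodule.span (Completion K) (s : Set M)
  have hSS' : S ≤ S'.restrictScalars K := hs ▸ Submodule.span_le_restrictScalars K _ _
  have hS'closed : IsClosed (S' : Set M) := S'.closed_of_finiteDimensional
  have : Module.Finite K S' := Module.Finite.trans (Completion K) S'
  have : FiniteDimensional K (S'.restrictScalars K) := this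
  exact Submodule.finiteDimensional_of_le (S.topologicalClosure_minimal hSS' hS'closed)

end CompletionModule

theorem ContinuousLinearMap.range_le_topologicalClosure_of_mapsTo {K E F : Type*}
    [NontriviallyNormedField K] [NormedAddCommGroup E] [NormedSpace K E]
    [NormedAddCommGroup F] [NormedSpace K F] {P : Set E}
    (hP : Dense (Submodule.span K P : Set E)) (L : E →L[K] F) {S : Submodule K F}
    (hL : Set.MapsTo L P S) :
    LinearMap.range (L : E →ₗ[K] F) ≤ S.topologicalClosure := by
  rintro _ ⟨x, rfl⟩
  have hspan : Submodule.span K P ≤ S.comap (L : E →ₗ[K] F) := Submodule.span_le.mpr hL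
  exact map_mem_closure L.continuous (hP x) fun y hy => hspan hy

section FiniteRank

variable {K V₁ V₂ W₁ W₂ T₁ T₂ : Type*} [NontriviallyNormedField K]
  [NormedAddCommGroup V₁] [NormedSpace K V₁] [CompleteSpace V₁]
  [NormedAddCommGroup V₂] [NormedSpace K V₂] [CompleteSpace V₂]
  [NormedAddCommGroup W₁] [NormedSpace K W₁]
  [NormedAddCommGroup W₂] [NormedSpace K W₂]
  [NormedAddCommGroup T₁] [NormedSpace K T₁]
  [NormedAddCommGroup T₂] [NormedSpace K T₂] [CompleteSpace T₂]

theorem finiteDimensional_range_of_apply_pure_tensor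
    (bil₁ : V₁ →L[K] W₁ →L[K] T₁) (bil₂ : V₂ →L[K] W₂ →L[K] T₂)
    (hdense₁ : Dense ((Submodule.span K
      {x : T₁ | ∃ (v : V₁) (w : W₁), x = bil₁ v w} : Submodule K T₁) : Set T₁))
    {a : V₁ →L[K] V₂} {b : W₁ →L[K] W₂}
    (ha : FiniteDimensional K (LinearMap.range (a : V₁ →ₗ[K] V₂)))
    (hb : FiniteDimensional K (LinearMap.range (b : W₁ →ₗ[K] W₂)))
    {L : T₁ →L[K] T₂} (hL : ∀ v w, L (bil₁ v w) = bil₂ (a v) (b w)) :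
    FiniteDimensional K (LinearMap.range (L : T₁ →ₗ[K] T₂)) := by
  set S := Submodule.map₂ bil₂.toLinearMap₁₂ (LinearMap.range (a : V₁ →ₗ[K] V₂))
    (LinearMap.range (b : W₁ →ₗ[K] W₂))
  have hrange : LinearMap.range (L : T₁ →ₗ[K] T₂) ≤ S.topologicalClosure := by
    refine L.range_le_topologicalClosure_of_mapsTo hdense₁ ?_
    rintro _ ⟨v, w, rfl⟩
    rw [hL]
    exact Submodule.apply_mem_map₂ _ (LinearMap.mem_range_self _ v) (LinearMap.mem_range_self _ w)
  have : FiniteDimensional K S := Module.Finite.iff_fg.mpr <|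
    (Module.Finite.iff_fg.mp ha).map₂ _ (Module.Finite.iff_fg.mp hb)
  by_cases ha0 : a = 0
  · have hS : S = ⊥ := by
      simp only [S, ha0, ContinuousLinearMap.toLinearMap_zero, LinearMap.range_zero,
        Submodule.map₂_bot_left]
    rw [hS, (isClosed_singleton (x := (0 : T₂))).submodule_topologicalClosure_eq] at hrange
    exact Submodule.finiteDimensional_of_le hrange
  · have := finiteDimensional_completion_of_finiteDimensional_range ha ha0
    have := S.finiteDimensional_topologicalClosure
    exact Submodule.finiteDimensional_of_le hrange

end FiniteRank

section SCC

variable (K E F : Type) [NontriviallyNormedField K]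
  [NormedAddCommGroup E] [NormedSpace K E] [NormedAddCommGroup F] [NormedSpace K F]

def finiteRankMaps : Set (E →L[K] F) :=
  {h | FiniteDimensional K (LinearMap.range (h : E →ₗ[K] F))}

variable {K E F}

theorem isSCC_iff_mem_closure {h : E →L[K] F} : IsSCC h ↔ h ∈ closure (finiteRankMaps K E F) := by
  simp only [Metric.mem_closure_iff, dist_eq_norm]
  constructor
  · intro hh ε hε
    obtain ⟨h', hfin, hle⟩ := hh (ε / 2) (half_pos hε)
    exact ⟨h', hfin, hle.trans_lt (half_lt_self hε)⟩
  · intro hh ε hε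
    obtain ⟨h', hfin, hlt⟩ := hh ε hε
    exact ⟨h', hfin, hlt.le⟩

end SCC

theorem scc_completed_tensor_product_general
    (K V₁ V₂ W₁ W₂ T₁ T₂ : Type) [NontriviallyNormedField K]
    [NormedAddCommGroup V₁] [NormedSpace K V₁] [CompleteSpace V₁]
    [NormedAddCommGroup V₂] [NormedSpace K V₂] [CompleteSpace V₂]
    [NormedAddCommGroup W₁] [NormedSpace K W₁]
    [NormedAddCommGroup W₂] [NormedSpace K W₂]
    [NormedAddCommGroup T₁] [NormedSpace K T₁]
    [NormedAddCommGroup T₂] [NormedSpace K T₂] [CompleteSpace T₂]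
    (bil₁ : V₁ →L[K] W₁ →L[K] T₁) (bil₂ : V₂ →L[K] W₂ →L[K] T₂)
    -- `T₁` is the completed tensor product: pure tensors span a dense subspace
    (hdense₁ : Dense ((Submodule.span K
      {x : T₁ | ∃ (v : V₁) (w : W₁), x = bil₁ v w} : Submodule K T₁) : Set T₁))
    -- the functorial lift `(a, b) ↦ a ⊗̂ b` of pairs of bounded maps
    (lift : (V₁ →L[K] V₂) →ₗ[K] (W₁ →L[K] W₂) →ₗ[K] (T₁ →L[K] T₂))
    (hlift : ∀ (a : V₁ →L[K] V₂) (b : W₁ →L[K] W₂) (v : V₁) (w : W₁),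
      lift a b (bil₁ v w) = bil₂ (a v) (b w))
    (hnorm : ∀ (a : V₁ →L[K] V₂) (b : W₁ →L[K] W₂), ‖lift a b‖ ≤ ‖a‖ * ‖b‖)
    (f : V₁ →L[K] V₂) (g : W₁ →L[K] W₂)
    (hf : IsSCC f) (hg : IsSCC g) :
    IsSCC (lift f g) := by
  have hcont : Continuous fun p : (V₁ →L[K] V₂) × (W₁ →L[K] W₂) => lift p.1 p.2 :=
    (lift.mkContinuous₂ 1 fun a b => by simpa only [one_mul] using hnorm a b).continuous₂
  rw [isSCC_iff_mem_closure] at hf hg ⊢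
  exact map_mem_closure₂ (f := fun a b => lift a b) hcont hf hg fun a ha b hb =>
    finiteDimensional_range_of_apply_pure_tensor bil₁ bil₂ hdense₁ ha hb (hlift a b)

/-- Let `f : V₁ → V₂` and `g : W₁ → W₂` be strictly completely
continuous bounded `K`-linear maps of `K`-Banach spaces.  Then
`f ⊗̂ g : V₁ ⊗̂_K W₁ → V₂ ⊗̂_K W₂` is also strictly completely continuous.  The
completed tensor products are modelled by Banach spaces `T₁`, `T₂` receiving
bounded bilinear maps with dense span, together with the functorial lift
`(a, b) ↦ a ⊗̂ b` on bounded maps satisfying `‖a ⊗̂ b‖ ≤ ‖a‖·‖b‖`. -/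
theorem scc_completed_tensor_product
    (K V₁ V₂ W₁ W₂ T₁ T₂ : Type) [NontriviallyNormedField K]
    [NormedAddCommGroup V₁] [NormedSpace K V₁] [CompleteSpace V₁]
    [NormedAddCommGroup V₂] [NormedSpace K V₂] [CompleteSpace V₂]
    [NormedAddCommGroup W₁] [NormedSpace K W₁] [CompleteSpace W₁]
    [NormedAddCommGroup W₂] [NormedSpace K W₂] [CompleteSpace W₂]
    [NormedAddCommGroup T₁] [NormedSpace K T₁] [CompleteSpace T₁]
    [NormedAddCommGroup T₂] [NormedSpace K T₂] [CompleteSpace T₂]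
    (bil₁ : V₁ →L[K] W₁ →L[K] T₁) (bil₂ : V₂ →L[K] W₂ →L[K] T₂)
    -- `T₁` is the completed tensor product: pure tensors span a dense subspace
    (hdense₁ : Dense ((Submodule.span K
      {x : T₁ | ∃ (v : V₁) (w : W₁), x = bil₁ v w} : Submodule K T₁) : Set T₁))
    -- the functorial lift `(a, b) ↦ a ⊗̂ b` of pairs of bounded maps
    (lift : (V₁ →L[K] V₂) →ₗ[K] (W₁ →L[K] W₂) →ₗ[K] (T₁ →L[K] T₂))
    (hlift : ∀ (a : V₁ →L[K] V₂) (b : W₁ →L[K] W₂) (v : V₁) (w : W₁),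
      lift a b (bil₁ v w) = bil₂ (a v) (b w))
    (hnorm : ∀ (a : V₁ →L[K] V₂) (b : W₁ →L[K] W₂), ‖lift a b‖ ≤ ‖a‖ * ‖b‖)
    (f : V₁ →L[K] V₂) (g : W₁ →L[K] W₂)
    (hf : IsSCC f) (hg : IsSCC g) :
    IsSCC (lift f g) :=
  scc_completed_tensor_product_general K V₁ V₂ W₁ W₂ T₁ T₂ bil₁ bil₂ hdense₁ lift hlift hnorm f g hf
    hg
end
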